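/- arXiv:2210.09519 — 6 statements merged into one kernel-verified Lean document; each statement's English description precedes it below -/
import Mathlib

section
/- Let y ∈ ℝⁿ, let D be an m×n real matrix, and let λ_F ≥ 0, λ_NI ≥ 0. Suppose ν̂ ∈ ℝᵐ minimizes the function ν ↦ (1/2)‖y − Dᵀν‖₂² over the box B = {ν ∈ ℝᵐ : −λ_F ≤ ν_j ≤ λ_F + λ_NI for all j = 1,…,m}. Then y − Dᵀν̂ is the unique minimizer over β ∈ ℝⁿ of the fused nearly-isotonic objective (1/2)‖y − β‖₂² + λ_F Σ_{j=1}^m |(Dβ)_j| + λ_NI Σ_{j=1}^m max((Dβ)_j, 0). -/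
open Finset

/-- The fused lasso nearly-isotonic objective
`F(β) = (1/2)‖y − β‖₂² + λ_F Σ_j |(Dβ)_j| + λ_L Σ_i |β_i| + λ_NI Σ_j max((Dβ)_j, 0)`. -/
noncomputable def flniObj {n m : ℕ} (D : Matrix (Fin m) (Fin n) ℝ)
    (y : Fin n → ℝ) (lF lL lNI : ℝ) (β : Fin n → ℝ) : ℝ :=
  (1 / 2) * ∑ i, (y i - β i) ^ 2 + lF * ∑ j, |D.mulVec β j|
    + lL * ∑ i, |β i| + lNI * ∑ j, max (D.mulVec β j) 0

lemma aux_le (a K : ℝ) (hK : 0 ≤ K) (h : ∀ t : ℝ, 0 < t → t ≤ 1 → t * a ≤ t^2 * K) : a ≤ 0 := by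
  by_contra hc
  push_neg at hc
  set t := min 1 (a / (2*K+1)) with ht
  have h1 : 0 < t := lt_min one_pos (div_pos hc (by linarith))
  have h2 : t ≤ 1 := min_le_left _ _
  have h3 : t ≤ a/(2*K+1) := min_le_right _ _
  have h4 := h t h1 h2
  have h5 : t * (2*K+1) ≤ a := by
    rw [← le_div_iff₀ (by linarith)] ; exact h3
  nlinarith

lemma dotT {n m : ℕ} (D : Matrix (Fin m) (Fin n) ℝ) (ν : Fin m → ℝ) (x : Fin n → ℝ) :
    ∑ i, D.transpose.mulVec ν i * x i = ∑ j, ν j * D.mulVec x j := by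
  simp only [Matrix.mulVec, dotProduct, Matrix.transpose_apply, Finset.sum_mul, Finset.mul_sum]
  rw [Finset.sum_comm]
  apply Finset.sum_congr rfl; intros; apply Finset.sum_congr rfl; intros; ring

lemma key_step {n m : ℕ} (y : Fin n → ℝ) (D : Matrix (Fin m) (Fin n) ℝ)
    (lF lNI : ℝ)
    (nuHat : Fin m → ℝ)
    (hbox : ∀ j, -lF ≤ nuHat j ∧ nuHat j ≤ lF + lNI)
    (hmin : ∀ ν : Fin m → ℝ, (∀ j, -lF ≤ ν j ∧ ν j ≤ lF + lNI) →
      (1 / 2) * ∑ i, (y i - D.transpose.mulVec nuHat i) ^ 2 ≤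
        (1 / 2) * ∑ i, (y i - D.transpose.mulVec ν i) ^ 2)
    (j : Fin m) (s : ℝ) (hs1 : -lF ≤ s) (hs2 : s ≤ lF + lNI) :
    s * D.mulVec (y - D.transpose.mulVec nuHat) j ≤
      nuHat j * D.mulVec (y - D.transpose.mulVec nuHat) j := by
  set β := y - D.transpose.mulVec nuHat with hβ
  set w := D.mulVec β j with hw
  set c := s - nuHat j with hc
  have S0 : (0:ℝ) ≤ c^2 * (∑ i, (D j i)^2) / 2 := by positivity
  have main : c * w ≤ 0 := by
    apply aux_le _ _ S0
    intro t ht0 ht1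
    set ν : Fin m → ℝ := Function.update nuHat j (nuHat j + t * c) with hν
    have hνbox : ∀ k, -lF ≤ ν k ∧ ν k ≤ lF + lNI := by
      intro k
      rcases eq_or_ne k j with rfl | hk
      · simp only [hν, Function.update_self, hc]
        constructor
        · nlinarith [(hbox k).1]
        · nlinarith [(hbox k).2]
      · simp only [hν, Function.update_of_ne hk]; exact hbox k
    have hval : ∀ i, D.transpose.mulVec ν i = D.transpose.mulVec nuHat i + t * c * D j i := by
      intro i
      simp only [Matrix.mulVec, dotProduct, Matrix.transpose_apply]
      have hpt : ∀ k : Fin m, D k i * ν k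
          = D k i * nuHat k + (if k = j then t * c * D j i else 0) := by
        intro k
        rcases eq_or_ne k j with rfl | hk
        · simp only [hν, Function.update_self, eq_self_iff_true, if_true]; ring
        · simp only [hν, Function.update_of_ne hk, if_neg hk]; ring
      rw [Finset.sum_congr rfl (fun k _ => hpt k), Finset.sum_add_distrib,
        Finset.sum_ite_eq' univ j]
      simp
    have hWdot : ∑ i, (y i - D.transpose.mulVec nuHat i) * D j i = w := by
      rw [hw, hβ]
      simp only [Matrix.mulVec, dotProduct, Pi.sub_apply]
      apply Finset.sum_congr rfl; intros; ring
    have hsum : ∑ i, (y i - D.transpose.mulVec ν i) ^ 2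
        = ∑ i, (y i - D.transpose.mulVec nuHat i) ^ 2
          - 2 * (t * c) * w + (t * c)^2 * ∑ i, (D j i)^2 := by
      have : ∀ i, (y i - D.transpose.mulVec ν i) ^ 2
          = (y i - D.transpose.mulVec nuHat i) ^ 2
            - 2 * (t * c) * ((y i - D.transpose.mulVec nuHat i) * D j i)
            + (t * c)^2 * (D j i)^2 := by
        intro i; rw [hval i]; ring
      rw [Finset.sum_congr rfl (fun i _ => this i), Finset.sum_add_distrib,
        Finset.sum_sub_distrib, ← Finset.mul_sum, ← Finset.mul_sum, hWdot]
    have hm := hmin ν hνbox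
    rw [hsum] at hm
    nlinarith [hm]
  have := main
  rw [hc, sub_mul] at this
  linarith


/-- If `nuHat` minimizes `ν ↦ (1/2)‖y − Dᵀν‖₂²` over the box
`{ν : −λ_F ≤ ν_j ≤ λ_F + λ_NI}`, then `y − DᵀnuHat` is the unique minimizer of the
fused nearly-isotonic objective. -/
theorem fnia_dual_solution {n m : ℕ} (y : Fin n → ℝ) (D : Matrix (Fin m) (Fin n) ℝ)
    (lF lNI : ℝ) (hF : 0 ≤ lF) (hNI : 0 ≤ lNI)
    (nuHat : Fin m → ℝ)
    (hbox : ∀ j, -lF ≤ nuHat j ∧ nuHat j ≤ lF + lNI)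
    (hmin : ∀ ν : Fin m → ℝ, (∀ j, -lF ≤ ν j ∧ ν j ≤ lF + lNI) →
      (1 / 2) * ∑ i, (y i - D.transpose.mulVec nuHat i) ^ 2 ≤
        (1 / 2) * ∑ i, (y i - D.transpose.mulVec ν i) ^ 2) :
    ∀ β : Fin n → ℝ, β ≠ y - D.transpose.mulVec nuHat →
      flniObj D y lF 0 lNI (y - D.transpose.mulVec nuHat) < flniObj D y lF 0 lNI β := by
  intro β hβne
  set bhat := y - D.transpose.mulVec nuHat with hbhat
  set v := D.mulVec β with hv
  set w := D.mulVec bhat with hw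
  have hterm : ∀ j, 0 ≤ nuHat j * (w j - v j) + (lF * |v j| + lNI * max (v j) 0)
      - (lF * |w j| + lNI * max (w j) 0) := by
    intro j
    have h1 : nuHat j * v j ≤ lF * |v j| + lNI * max (v j) 0 := by
      rcases le_or_gt 0 (v j) with h | h
      · rw [abs_of_nonneg h, max_eq_left h]; nlinarith [(hbox j).2]
      · rw [abs_of_neg h, max_eq_right h.le]; nlinarith [(hbox j).1]
    have h2 : lF * |w j| + lNI * max (w j) 0 ≤ nuHat j * w j := by
      rcases le_or_gt 0 (w j) with h | h
      · rw [abs_of_nonneg h, max_eq_left h]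
        have hk := key_step y D lF lNI nuHat hbox hmin j (lF + lNI) (by linarith) le_rfl
        nlinarith [hk]
      · rw [abs_of_neg h, max_eq_right h.le]
        have hk := key_step y D lF lNI nuHat hbox hmin j (-lF) le_rfl (by linarith)
        nlinarith [hk]
    nlinarith [h1, h2]
  obtain ⟨i0, hi0⟩ : ∃ i, β i ≠ bhat i := by
    by_contra hcon; push_neg at hcon; exact hβne (funext hcon)
  have hqpos : 0 < ∑ i, (bhat i - β i)^2 := by
    apply Finset.sum_pos' (fun i _ => sq_nonneg _)
    exact ⟨i0, Finset.mem_univ _,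
      pow_two_pos_of_ne_zero (sub_ne_zero.mpr (Ne.symm hi0))⟩
  have hcross : ∑ i, (y i - bhat i) * (bhat i - β i) = ∑ j, nuHat j * (w j - v j) := by
    have h1 : ∀ i, (y i - bhat i) * (bhat i - β i)
        = D.transpose.mulVec nuHat i * (bhat - β) i := by
      intro i; simp [hbhat]
    rw [Finset.sum_congr rfl (fun i _ => h1 i), dotT]
    apply Finset.sum_congr rfl; intro j _
    rw [Matrix.mulVec_sub]; simp [hw, hv]
  have hiden : flniObj D y lF 0 lNI β - flniObj D y lF 0 lNI bhat
      = (1/2) * ∑ i, (bhat i - β i)^2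
        + ∑ j, (nuHat j * (w j - v j) + (lF * |v j| + lNI * max (v j) 0)
            - (lF * |w j| + lNI * max (w j) 0)) := by
    unfold flniObj
    have hsq : ∑ i, (y i - β i)^2 = ∑ i, (y i - bhat i)^2
        + 2 * ∑ i, (y i - bhat i) * (bhat i - β i) + ∑ i, (bhat i - β i)^2 := by
      rw [Finset.mul_sum, ← Finset.sum_add_distrib, ← Finset.sum_add_distrib]
      apply Finset.sum_congr rfl; intros; ring
    rw [hsq, hcross]
    simp only [Finset.sum_sub_distrib, Finset.sum_add_distrib, ← Finset.mul_sum]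
    ring
  have hterm_sum : 0 ≤ ∑ j, (nuHat j * (w j - v j) + (lF * |v j| + lNI * max (v j) 0)
      - (lF * |w j| + lNI * max (w j) 0)) := Finset.sum_nonneg (fun j _ => hterm j)
  linarith [hiden, hqpos, hterm_sum]
end

section
/- Let y ∈ ℝⁿ, let D be an m×n real matrix, and let λ_NI ≥ 0. Then the nearly-isotonic estimator equals a fusion estimator at shifted data: β̂^{NI}(y, λ_NI) = β̂^F(y − (λ_NI/2) Dᵀ1, λ_NI/2), i.e. the unique minimizer of (1/2)‖y − β‖₂² + λ_NI Σ_{j=1}^m max((Dβ)_j, 0) coincides with the unique minimizer of (1/2)‖(y − (λ_NI/2)Dᵀ1) − β‖₂² + (λ_NI/2) Σ_{j=1}^m |(Dβ)_j|. -/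
open Finset

lemma flni_shift_eq {n m : ℕ} (y : Fin n → ℝ) (D : Matrix (Fin m) (Fin n) ℝ)
    (lNI : ℝ) (β : Fin n → ℝ) :
    flniObj D (y - (lNI / 2) • D.transpose.mulVec 1) (lNI / 2) 0 0 β
      = flniObj D y 0 0 lNI β
        + ((1/2) * ∑ i, (lNI / 2 * D.transpose.mulVec 1 i)^2
           - ∑ i, (lNI / 2 * D.transpose.mulVec 1 i) * y i) := by
  set c := lNI / 2 with hc
  have hsum : ∑ i, (c * D.transpose.mulVec 1 i) * β i = ∑ j, c * D.mulVec β j := by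
    simp only [Matrix.mulVec, dotProduct, Matrix.transpose_apply, Pi.one_apply,
      mul_one, Finset.mul_sum, Finset.sum_mul, mul_assoc]
    rw [Finset.sum_comm]
  have hmax : ∀ t : ℝ, lNI * max t 0 = c * |t| + c * t := by
    intro t
    rcases le_total t 0 with h | h
    · rw [max_eq_right h, abs_of_nonpos h]; rw [hc]; ring
    · rw [max_eq_left h, abs_of_nonneg h]; rw [hc]; ring
  have E2 : lNI * ∑ j, max (D.mulVec β j) 0
      = c * ∑ j, |D.mulVec β j| + ∑ i, (c * D.transpose.mulVec 1 i) * β i := by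
    rw [Finset.mul_sum]
    calc ∑ j, lNI * max (D.mulVec β j) 0
        = ∑ j, (c * |D.mulVec β j| + c * D.mulVec β j) :=
          Finset.sum_congr rfl fun j _ => hmax _
      _ = c * ∑ j, |D.mulVec β j| + ∑ j, c * D.mulVec β j := by
          rw [Finset.sum_add_distrib, Finset.mul_sum]
      _ = _ := by rw [hsum]
  have E1 : ∑ i, (y i - c * D.transpose.mulVec 1 i - β i)^2
      = ∑ i, (y i - β i)^2 + 2 * ∑ i, (c * D.transpose.mulVec 1 i) * β i
        + ∑ i, (c * D.transpose.mulVec 1 i)^2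
        - 2 * ∑ i, (c * D.transpose.mulVec 1 i) * y i := by
    simp only [Finset.mul_sum, ← Finset.sum_add_distrib, ← Finset.sum_sub_distrib]
    exact Finset.sum_congr rfl fun i _ => by ring
  simp only [flniObj, zero_mul, add_zero, zero_add, Pi.sub_apply, Pi.smul_apply, smul_eq_mul]
  rw [E2, E1]
  ring

/-- The nearly-isotonic estimator equals a fusion estimator at shifted data:
`β̂^{NI}(y, λ_NI) = β̂^F(y − (λ_NI/2) Dᵀ1, λ_NI/2)`. -/
theorem ni_eq_fusion_shifted {n m : ℕ} (y : Fin n → ℝ) (D : Matrix (Fin m) (Fin n) ℝ)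
    (lNI : ℝ) (hNI : 0 ≤ lNI)
    (βNI βF : Fin n → ℝ)
    (hβNI : ∀ β, flniObj D y 0 0 lNI βNI ≤ flniObj D y 0 0 lNI β)
    (hβF : ∀ β, flniObj D (y - (lNI / 2) • D.transpose.mulVec 1) (lNI / 2) 0 0 βF ≤
      flniObj D (y - (lNI / 2) • D.transpose.mulVec 1) (lNI / 2) 0 0 β) :
    βNI = βF := by
  -- βF also minimizes the NI objective
  have hβF' : ∀ β, flniObj D y 0 0 lNI βF ≤ flniObj D y 0 0 lNI β := by
    intro β
    have h := hβF β
    rw [flni_shift_eq, flni_shift_eq] at h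
    linarith
  -- midpoint
  set βM : Fin n → ℝ := fun i => (βNI i + βF i) / 2 with hβM
  have hmul : ∀ j, D.mulVec βM j = (D.mulVec βNI j + D.mulVec βF j) / 2 := by
    intro j
    simp only [hβM, Matrix.mulVec, dotProduct, ← Finset.sum_add_distrib,
      Finset.sum_div]
    exact Finset.sum_congr rfl fun i _ => by ring
  have hmid : flniObj D y 0 0 lNI βM
      ≤ (flniObj D y 0 0 lNI βNI + flniObj D y 0 0 lNI βF) / 2
        - (1/8) * ∑ i, (βNI i - βF i)^2 := by
    simp only [flniObj, zero_mul, add_zero, zero_add]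
    have hq : ∑ i, (y i - βM i)^2
        = (∑ i, (y i - βNI i)^2 + ∑ i, (y i - βF i)^2) / 2
          - (1/4) * ∑ i, (βNI i - βF i)^2 := by
      simp only [Finset.mul_sum, ← Finset.sum_add_distrib, ← Finset.sum_sub_distrib,
        Finset.sum_div]
      exact Finset.sum_congr rfl fun i _ => by simp only [hβM]; ring
    have hp : ∑ j, max (D.mulVec βM j) 0
        ≤ (∑ j, max (D.mulVec βNI j) 0 + ∑ j, max (D.mulVec βF j) 0) / 2 := by
      rw [← Finset.sum_add_distrib, Finset.sum_div]
      apply Finset.sum_le_sum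
      intro j _
      rw [hmul]
      rcases le_max_iff.mp (le_refl (max (D.mulVec βNI j + D.mulVec βF j) 0)) with _ | _
      all_goals
        apply max_le
        · have h1 : D.mulVec βNI j ≤ max (D.mulVec βNI j) 0 := le_max_left _ _
          have h2 : D.mulVec βF j ≤ max (D.mulVec βF j) 0 := le_max_left _ _
          linarith
        · have h1 : (0:ℝ) ≤ max (D.mulVec βNI j) 0 := le_max_right _ _
          have h2 : (0:ℝ) ≤ max (D.mulVec βF j) 0 := le_max_right _ _
          linarith
    have := mul_le_mul_of_nonneg_left hp hNI
    rw [hq]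
    linarith
  have h1 := hβNI βM
  have h2 := hβF' βM
  have heq : flniObj D y 0 0 lNI βNI = flniObj D y 0 0 lNI βF :=
    le_antisymm (hβNI βF) (hβF' βNI)
  have hS : ∑ i, (βNI i - βF i)^2 ≤ 0 := by linarith [hmid, h1]
  have hS0 : ∀ i ∈ Finset.univ, (βNI i - βF i)^2 = 0 := by
    intro i _
    have hnn : ∀ i ∈ (Finset.univ : Finset (Fin n)), (0:ℝ) ≤ (βNI i - βF i)^2 :=
      fun i _ => sq_nonneg _
    have := (Finset.sum_eq_zero_iff_of_nonneg hnn).mp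
      (le_antisymm hS (Finset.sum_nonneg hnn))
    exact this i (Finset.mem_univ i)
  funext i
  have := hS0 i (Finset.mem_univ i)
  have : βNI i - βF i = 0 := by
    have := pow_eq_zero_iff (n := 2) (by norm_num) |>.mp this
    exact this
  linarith
end

section
/- Let y ∈ ℝⁿ, let D be an m×n real matrix, and let λ_F ≥ 0, λ_NI ≥ 0. Then the fused nearly-isotonic estimator equals a nearly-isotonic estimator at shifted data: β̂^{FNI}(y, λ_F, λ_NI) = β̂^{NI}(y + λ_F Dᵀ1, λ_NI + 2λ_F). -/
open Finset

/-- The fused nearly-isotonic estimator equals a nearly-isotonic estimator at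
shifted data: `β̂^{FNI}(y, λ_F, λ_NI) = β̂^{NI}(y + λ_F Dᵀ1, λ_NI + 2λ_F)`. -/
theorem fni_eq_ni_shifted {n m : ℕ} (y : Fin n → ℝ) (D : Matrix (Fin m) (Fin n) ℝ)
    (lF lNI : ℝ) (hF : 0 ≤ lF) (hNI : 0 ≤ lNI)
    (βFNI βNI : Fin n → ℝ)
    (hβFNI : ∀ β, flniObj D y lF 0 lNI βFNI ≤ flniObj D y lF 0 lNI β)
    (hβNI : ∀ β, flniObj D (y + lF • D.transpose.mulVec 1) 0 0 (lNI + 2 * lF) βNI ≤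
      flniObj D (y + lF • D.transpose.mulVec 1) 0 0 (lNI + 2 * lF) β) :
    βFNI = βNI := by
  set a : Fin n → ℝ := D.transpose.mulVec 1 with ha
  set y' : Fin n → ℝ := y + lF • a with hy'
  set l' : ℝ := lNI + 2 * lF with hl'
  set c : ℝ := -(lF * ∑ i, a i * y i) - lF ^ 2 / 2 * ∑ i, (a i) ^ 2 with hc
  have hy'i : ∀ i, y' i = y i + lF * a i := by
    intro i; simp [hy']
  have hsum : ∀ β : Fin n → ℝ, ∑ j, D.mulVec β j = ∑ i, a i * β i := by
    intro β
    simp only [ha, Matrix.mulVec, Matrix.transpose_apply, dotProduct, mul_one]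
    rw [Finset.sum_comm]
    simp [Finset.sum_mul]
  -- the two objectives differ by the constant `c`
  have key : ∀ β, flniObj D y lF 0 lNI β = flniObj D y' 0 0 l' β + c := by
    intro β
    have h1 : ∑ j, |D.mulVec β j| =
        2 * (∑ j, max (D.mulVec β j) 0) - ∑ i, a i * β i := by
      rw [← hsum]
      have : ∀ j ∈ Finset.univ, |D.mulVec β j| =
          2 * max (D.mulVec β j) 0 - D.mulVec β j := by
        intro j _
        rcases le_total (D.mulVec β j) 0 with h | h
        · rw [abs_of_nonpos h, max_eq_right h]; ring
        · rw [abs_of_nonneg h, max_eq_left h]; ring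
      rw [Finset.sum_congr rfl this, Finset.sum_sub_distrib, Finset.mul_sum]
    have h2 : ∑ i, (y' i - β i) ^ 2 =
        ∑ i, (y i - β i) ^ 2 + 2 * lF * ∑ i, a i * y i
          - 2 * lF * ∑ i, a i * β i + lF ^ 2 * ∑ i, (a i) ^ 2 := by
      have : ∀ i ∈ Finset.univ, (y' i - β i) ^ 2 =
          (y i - β i) ^ 2 + 2 * lF * (a i * y i)
            - 2 * lF * (a i * β i) + lF ^ 2 * (a i) ^ 2 := by
        intro i _
        rw [hy'i i]; ring
      rw [Finset.sum_congr rfl this]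
      simp [Finset.sum_add_distrib, Finset.sum_sub_distrib, Finset.mul_sum]
    simp only [flniObj, zero_mul, add_zero, zero_add]
    rw [h1, h2, hc, hl']
    ring
  -- hence both are minimizers of the same objective `G = flniObj D y' 0 0 l'`
  have hG1 : ∀ β, flniObj D y' 0 0 l' βFNI ≤ flniObj D y' 0 0 l' β := by
    intro β
    have := hβFNI β
    rw [key, key] at this
    linarith
  -- strict convexity argument at the midpoint
  set mβ : Fin n → ℝ := fun i => (βFNI i + βNI i) / 2 with hm
  have hDm : ∀ j, D.mulVec mβ j = (D.mulVec βFNI j + D.mulVec βNI j) / 2 := by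
    intro j
    have : mβ = (2:ℝ)⁻¹ • (βFNI + βNI) := by
      funext i; simp [hm]; ring
    rw [this, Matrix.mulVec_smul, Matrix.mulVec_add]
    simp [div_eq_inv_mul]
  have hmax : ∀ j ∈ Finset.univ, max (D.mulVec mβ j) 0 ≤
      (max (D.mulVec βFNI j) 0 + max (D.mulVec βNI j) 0) / 2 := by
    intro j _
    have h1 := le_max_left (D.mulVec βFNI j) 0
    have h2 := le_max_left (D.mulVec βNI j) 0
    have h3 := le_max_right (D.mulVec βFNI j) (0:ℝ)
    have h4 := le_max_right (D.mulVec βNI j) (0:ℝ)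
    rw [hDm j]
    apply max_le <;> linarith
  have hS : ∑ j, max (D.mulVec mβ j) 0 ≤
      ((∑ j, max (D.mulVec βFNI j) 0) + ∑ j, max (D.mulVec βNI j) 0) / 2 := by
    calc ∑ j, max (D.mulVec mβ j) 0
        ≤ ∑ j, (max (D.mulVec βFNI j) 0 + max (D.mulVec βNI j) 0) / 2 :=
          Finset.sum_le_sum hmax
      _ = ((∑ j, max (D.mulVec βFNI j) 0) + ∑ j, max (D.mulVec βNI j) 0) / 2 := by
          rw [← Finset.sum_add_distrib, Finset.sum_div]
  have hQ : ∑ i, (y' i - mβ i) ^ 2 =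
      ((∑ i, (y' i - βFNI i) ^ 2) + ∑ i, (y' i - βNI i) ^ 2) / 2
        - ∑ i, ((βFNI i - βNI i) / 2) ^ 2 := by
    have : ∀ i ∈ Finset.univ, (y' i - mβ i) ^ 2 =
        ((y' i - βFNI i) ^ 2 + (y' i - βNI i) ^ 2) / 2
          - ((βFNI i - βNI i) / 2) ^ 2 := by
      intro i _
      simp only [hm]; ring
    rw [Finset.sum_congr rfl this, Finset.sum_sub_distrib, ← Finset.sum_add_distrib,
      Finset.sum_div]
  have hR0 : (0:ℝ) ≤ ∑ i, ((βFNI i - βNI i) / 2) ^ 2 :=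
    Finset.sum_nonneg fun i _ => sq_nonneg _
  have hl'0 : 0 ≤ l' := by rw [hl']; linarith
  have h₁ := hG1 mβ
  have h₂ := hβNI mβ
  simp only [flniObj, zero_mul, add_zero, zero_add] at h₁ h₂
  have hmulS : l' * ∑ j, max (D.mulVec mβ j) 0 ≤
      l' * (((∑ j, max (D.mulVec βFNI j) 0) + ∑ j, max (D.mulVec βNI j) 0) / 2) :=
    mul_le_mul_of_nonneg_left hS hl'0
  have hRle : ∑ i, ((βFNI i - βNI i) / 2) ^ 2 ≤ 0 := by
    rw [hQ] at h₁ h₂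
    nlinarith [h₁, h₂, hmulS]
  have hR : ∑ i, ((βFNI i - βNI i) / 2) ^ 2 = 0 := le_antisymm hRle hR0
  funext i
  have := (Finset.sum_eq_zero_iff_of_nonneg fun i _ => sq_nonneg (((βFNI i - βNI i) / 2))).mp hR i (Finset.mem_univ i)
  have h0 : (βFNI i - βNI i) / 2 = 0 := by
    exact pow_eq_zero_iff (by norm_num) |>.mp this
  linarith
end

section
/- Let y ∈ ℝⁿ, let D be an m×n real matrix, and let λ_F ≥ 0, λ_NI ≥ 0. Then the fused nearly-isotonic estimator equals a fusion estimator at shifted data: β̂^{FNI}(y, λ_F, λ_NI) = β̂^F(y − (λ_NI/2) Dᵀ1, λ_NI/2 + λ_F). -/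
open Finset

/-- The fused nearly-isotonic estimator equals a fusion estimator at shifted data:
`β̂^{FNI}(y, λ_F, λ_NI) = β̂^F(y − (λ_NI/2) Dᵀ1, λ_NI/2 + λ_F)`. -/
theorem fni_eq_fusion_shifted {n m : ℕ} (y : Fin n → ℝ) (D : Matrix (Fin m) (Fin n) ℝ)
    (lF lNI : ℝ) (hF : 0 ≤ lF) (hNI : 0 ≤ lNI)
    (βFNI βF : Fin n → ℝ)
    (hβFNI : ∀ β, flniObj D y lF 0 lNI βFNI ≤ flniObj D y lF 0 lNI β)
    (hβF : ∀ β, flniObj D (y - (lNI / 2) • D.transpose.mulVec 1) (lNI / 2 + lF) 0 0 βF ≤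
      flniObj D (y - (lNI / 2) • D.transpose.mulVec 1) (lNI / 2 + lF) 0 0 β) :
    βFNI = βF := by
  set y' : Fin n → ℝ := y - (lNI / 2) • D.transpose.mulVec 1 with hy'
  set l : ℝ := lNI / 2 + lF with hl
  set c : Fin n → ℝ := D.transpose.mulVec 1 with hc
  -- Key: the two objectives differ by a constant
  have key : ∀ β, flniObj D y lF 0 lNI β
      = flniObj D y' l 0 0 β
        + (lNI / 2 * ∑ i, c i * y i - lNI ^ 2 / 8 * ∑ i, (c i) ^ 2) := by
    intro β
    have h1 : ∑ j, max (D.mulVec β j) 0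
        = (∑ j, D.mulVec β j + ∑ j, |D.mulVec β j|) / 2 := by
      rw [← Finset.sum_add_distrib, Finset.sum_div]
      refine Finset.sum_congr rfl fun j _ => ?_
      rcases le_total (D.mulVec β j) 0 with h | h
      · rw [max_eq_right h, abs_of_nonpos h]; ring
      · rw [max_eq_left h, abs_of_nonneg h]; ring
    have h2 : ∑ j, D.mulVec β j = ∑ i, c i * β i := by
      simp only [hc, Matrix.mulVec, dotProduct, Matrix.transpose_apply,
        Pi.one_apply, mul_one, Finset.sum_mul]
      rw [Finset.sum_comm]
    have h3 : ∑ i, (y' i - β i) ^ 2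
        = ∑ i, (y i - β i) ^ 2 - lNI * ∑ i, c i * y i + lNI * ∑ i, c i * β i
          + lNI ^ 2 / 4 * ∑ i, (c i) ^ 2 := by
      have hp : ∀ i, (y' i - β i) ^ 2
          = (y i - β i) ^ 2 - lNI * (c i * y i) + lNI * (c i * β i)
            + lNI ^ 2 / 4 * (c i) ^ 2 := by
        intro i
        simp only [hy', hc, Pi.sub_apply, Pi.smul_apply, smul_eq_mul]
        ring
      rw [Finset.sum_congr rfl (fun i _ => hp i)]
      simp only [Finset.sum_add_distrib, Finset.sum_sub_distrib, ← Finset.mul_sum]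
    unfold flniObj
    rw [h1, h2, h3]
    ring
  -- Both points minimize the fusion objective
  have hG1 : ∀ β, flniObj D y' l 0 0 βFNI ≤ flniObj D y' l 0 0 β := by
    intro β
    have h := hβFNI β
    rw [key, key] at h
    linarith
  have hEq : flniObj D y' l 0 0 βFNI = flniObj D y' l 0 0 βF :=
    le_antisymm (hG1 βF) (hβF βFNI)
  -- Midpoint / strict convexity argument
  set μ : Fin n → ℝ := fun i => (βFNI i + βF i) / 2 with hμ
  have hlnn : 0 ≤ l := by rw [hl]; linarith
  have hmul : ∀ j, D.mulVec μ j = (D.mulVec βFNI j + D.mulVec βF j) / 2 := by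
    intro j
    simp only [Matrix.mulVec, dotProduct, hμ]
    rw [← Finset.sum_add_distrib, Finset.sum_div]
    refine Finset.sum_congr rfl fun i _ => by ring
  have hpen : ∑ j, |D.mulVec μ j|
      ≤ (∑ j, |D.mulVec βFNI j| + ∑ j, |D.mulVec βF j|) / 2 := by
    rw [← Finset.sum_add_distrib, Finset.sum_div]
    refine Finset.sum_le_sum fun j _ => ?_
    rw [hmul j, abs_div, abs_two]
    linarith [abs_add_le (D.mulVec βFNI j) (D.mulVec βF j)]
  have hquad : ∑ i, (y' i - μ i) ^ 2
      = (∑ i, (y' i - βFNI i) ^ 2 + ∑ i, (y' i - βF i) ^ 2) / 2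
        - (∑ i, (βFNI i - βF i) ^ 2) / 4 := by
    have hp : ∀ i, (y' i - μ i) ^ 2
        = ((y' i - βFNI i) ^ 2 + (y' i - βF i) ^ 2) / 2
          - (βFNI i - βF i) ^ 2 / 4 := by
      intro i; simp only [hμ]; ring
    rw [Finset.sum_congr rfl (fun i _ => hp i), Finset.sum_sub_distrib,
      ← Finset.sum_div, ← Finset.sum_div, Finset.sum_add_distrib]
  have hGμ : flniObj D y' l 0 0 μ
      ≤ (flniObj D y' l 0 0 βFNI + flniObj D y' l 0 0 βF) / 2
        - (∑ i, (βFNI i - βF i) ^ 2) / 8 := by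
    unfold flniObj
    simp only [zero_mul, add_zero]
    rw [hquad]
    have := mul_le_mul_of_nonneg_left hpen hlnn
    linarith
  have hcontr : flniObj D y' l 0 0 βF ≤ flniObj D y' l 0 0 μ := hβF μ
  have hsum0 : ∑ i, (βFNI i - βF i) ^ 2 ≤ 0 := by
    rw [hEq] at hGμ
    linarith
  have h0 : ∑ i, (βFNI i - βF i) ^ 2 = 0 :=
    le_antisymm hsum0 (Finset.sum_nonneg fun i _ => sq_nonneg _)
  funext i
  have hi : (βFNI i - βF i) ^ 2 = 0 :=
    (Finset.sum_eq_zero_iff_of_nonneg (fun i _ => sq_nonneg _)).mp h0 i (Finset.mem_univ i)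
  have := sq_eq_zero_iff.mp hi
  linarith
end

section
/- Let y ∈ ℝⁿ, let D be an m×n real matrix, and let λ_F ≥ 0, λ_L ≥ 0, λ_NI ≥ 0. Then the fused lasso nearly-isotonic estimator equals a fused lasso estimator at shifted data: β̂^{FLNI}(y, λ_F, λ_L, λ_NI) = β̂^{FL}(y − (λ_NI/2) Dᵀ1, λ_NI/2 + λ_F, λ_L). -/
open Finset

lemma max_half (a : ℝ) : max a 0 = (a + |a|) / 2 := by
  rcases le_total a 0 with h | h
  · rw [max_eq_right h, abs_of_nonpos h]; ring
  · rw [max_eq_left h, abs_of_nonneg h]; ring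

lemma flni_shift {n m : ℕ} (D : Matrix (Fin m) (Fin n) ℝ) (y : Fin n → ℝ)
    (lF lL lNI : ℝ) (β : Fin n → ℝ) :
    flniObj D y lF lL lNI β
      = flniObj D (y - (lNI / 2) • D.transpose.mulVec 1) (lNI / 2 + lF) lL 0 β
        + (∑ i, ((lNI / 2) • D.transpose.mulVec 1) i * y i
           - (1/2) * ∑ i, (((lNI / 2) • D.transpose.mulVec 1) i) ^ 2) := by
  set c : Fin n → ℝ := (lNI / 2) • D.transpose.mulVec 1 with hc
  have hsub : ∀ i, (y - c) i = y i - c i := fun i => rfl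
  unfold flniObj
  simp only [hsub]
  have h1 : ∑ i, (y i - β i) ^ 2 - ∑ i, (y i - c i - β i) ^ 2
      = 2 * ∑ i, c i * y i - 2 * ∑ i, c i * β i - ∑ i, (c i) ^ 2 := by
    rw [← Finset.sum_sub_distrib, Finset.mul_sum, Finset.mul_sum,
      ← Finset.sum_sub_distrib, ← Finset.sum_sub_distrib]
    exact Finset.sum_congr rfl fun i _ => by ring
  have h2 : ∑ j, max (D.mulVec β j) 0
      = (∑ j, D.mulVec β j + ∑ j, |D.mulVec β j|) / 2 := by
    calc ∑ j, max (D.mulVec β j) 0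
        = ∑ j, (D.mulVec β j + |D.mulVec β j|) / 2 :=
          Finset.sum_congr rfl fun j _ => max_half _
      _ = (∑ j, (D.mulVec β j + |D.mulVec β j|)) / 2 := by rw [Finset.sum_div]
      _ = (∑ j, D.mulVec β j + ∑ j, |D.mulVec β j|) / 2 := by rw [Finset.sum_add_distrib]
  have h3 : ∑ i, c i * β i = lNI / 2 * ∑ j, D.mulVec β j := by
    simp only [hc, Pi.smul_apply, smul_eq_mul, Matrix.mulVec, dotProduct,
      Matrix.transpose_apply, Pi.one_apply, mul_one]
    calc ∑ i, (lNI / 2 * ∑ j, D j i) * β i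
        = ∑ i, ∑ j, lNI / 2 * (D j i * β i) := by
          refine Finset.sum_congr rfl fun i _ => ?_
          rw [mul_assoc, Finset.sum_mul, Finset.mul_sum]
      _ = ∑ j, ∑ i, lNI / 2 * (D j i * β i) := Finset.sum_comm
      _ = lNI / 2 * ∑ j, ∑ i, D j i * β i := by
          rw [Finset.mul_sum]
          exact Finset.sum_congr rfl fun j _ => (Finset.mul_sum _ _ _).symm
  have h2' : lNI * ∑ j, max (D.mulVec β j) 0
      = lNI / 2 * ∑ j, D.mulVec β j + lNI / 2 * ∑ j, |D.mulVec β j| := by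
    rw [h2]; ring
  nlinarith [h1, h2', h3]

lemma flni_mid {n m : ℕ} (D : Matrix (Fin m) (Fin n) ℝ) (y : Fin n → ℝ)
    (lF lL lNI : ℝ) (hF : 0 ≤ lF) (hL : 0 ≤ lL) (hNI : 0 ≤ lNI) (β₁ β₂ : Fin n → ℝ) :
    flniObj D y lF lL lNI (fun i => (β₁ i + β₂ i) / 2)
      ≤ (flniObj D y lF lL lNI β₁ + flniObj D y lF lL lNI β₂) / 2
        - (1 / 8) * ∑ i, (β₁ i - β₂ i) ^ 2 := by
  set mid : Fin n → ℝ := fun i => (β₁ i + β₂ i) / 2 with hmiddef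
  have hmv : ∀ j, D.mulVec mid j = (D.mulVec β₁ j + D.mulVec β₂ j) / 2 := by
    intro j
    simp only [Matrix.mulVec, dotProduct, hmiddef]
    rw [← Finset.sum_add_distrib, Finset.sum_div]
    exact Finset.sum_congr rfl fun i _ => by ring
  have hq : ∑ i, (y i - mid i) ^ 2
      = (∑ i, (y i - β₁ i) ^ 2 + ∑ i, (y i - β₂ i) ^ 2) / 2
        - (1 / 4) * ∑ i, (β₁ i - β₂ i) ^ 2 := by
    calc ∑ i, (y i - mid i) ^ 2
        = ∑ i, (((y i - β₁ i) ^ 2 + (y i - β₂ i) ^ 2) / 2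
            - 1 / 4 * (β₁ i - β₂ i) ^ 2) :=
          Finset.sum_congr rfl fun i _ => by simp only [hmiddef]; ring
      _ = _ := by
          rw [Finset.sum_sub_distrib, ← Finset.sum_div, Finset.sum_add_distrib,
            ← Finset.mul_sum]
  have habs : ∑ j, |D.mulVec mid j|
      ≤ (∑ j, |D.mulVec β₁ j| + ∑ j, |D.mulVec β₂ j|) / 2 := by
    calc ∑ j, |D.mulVec mid j|
        ≤ ∑ j, (|D.mulVec β₁ j| + |D.mulVec β₂ j|) / 2 := by
          refine Finset.sum_le_sum fun j _ => ?_
          rw [hmv j, abs_div, abs_two]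
          have := abs_add_le (D.mulVec β₁ j) (D.mulVec β₂ j)
          linarith
      _ = _ := by rw [← Finset.sum_div, Finset.sum_add_distrib]
  have hLabs : ∑ i, |mid i| ≤ (∑ i, |β₁ i| + ∑ i, |β₂ i|) / 2 := by
    calc ∑ i, |mid i|
        ≤ ∑ i, (|β₁ i| + |β₂ i|) / 2 := by
          refine Finset.sum_le_sum fun i _ => ?_
          simp only [hmiddef]
          rw [abs_div, abs_two]
          have := abs_add_le (β₁ i) (β₂ i)
          linarith
      _ = _ := by rw [← Finset.sum_div, Finset.sum_add_distrib]
  have hmax : ∑ j, max (D.mulVec mid j) 0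
      ≤ (∑ j, max (D.mulVec β₁ j) 0 + ∑ j, max (D.mulVec β₂ j) 0) / 2 := by
    calc ∑ j, max (D.mulVec mid j) 0
        ≤ ∑ j, (max (D.mulVec β₁ j) 0 + max (D.mulVec β₂ j) 0) / 2 := by
          refine Finset.sum_le_sum fun j _ => ?_
          rw [hmv j]
          have h1 := le_max_left (D.mulVec β₁ j) 0
          have h2 := le_max_left (D.mulVec β₂ j) 0
          have h3 := le_max_right (D.mulVec β₁ j) 0
          have h4 := le_max_right (D.mulVec β₂ j) 0
          refine max_le (by linarith) (by linarith)
      _ = _ := by rw [← Finset.sum_div, Finset.sum_add_distrib]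
  have e2 := mul_le_mul_of_nonneg_left habs hF
  have e3 := mul_le_mul_of_nonneg_left hLabs hL
  have e4 := mul_le_mul_of_nonneg_left hmax hNI
  unfold flniObj
  linarith [hq, e2, e3, e4]

/-- The fused lasso nearly-isotonic estimator equals a fused lasso estimator at
shifted data: `β̂^{FLNI}(y, λ_F, λ_L, λ_NI) = β̂^{FL}(y − (λ_NI/2) Dᵀ1, λ_NI/2 + λ_F, λ_L)`. -/
theorem flni_eq_fl_shifted {n m : ℕ} (y : Fin n → ℝ) (D : Matrix (Fin m) (Fin n) ℝ)
    (lF lL lNI : ℝ) (hF : 0 ≤ lF) (hL : 0 ≤ lL) (hNI : 0 ≤ lNI)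
    (βFLNI βFL : Fin n → ℝ)
    (hβFLNI : ∀ β, flniObj D y lF lL lNI βFLNI ≤ flniObj D y lF lL lNI β)
    (hβFL : ∀ β, flniObj D (y - (lNI / 2) • D.transpose.mulVec 1) (lNI / 2 + lF) lL 0 βFL ≤
      flniObj D (y - (lNI / 2) • D.transpose.mulVec 1) (lNI / 2 + lF) lL 0 β) :
    βFLNI = βFL := by
  have hFL' : ∀ β, flniObj D y lF lL lNI βFL ≤ flniObj D y lF lL lNI β := by
    intro β
    rw [flni_shift D y lF lL lNI βFL, flni_shift D y lF lL lNI β]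
    linarith [hβFL β]
  have heq : flniObj D y lF lL lNI βFLNI = flniObj D y lF lL lNI βFL :=
    le_antisymm (hβFLNI βFL) (hFL' βFLNI)
  have hm := flni_mid D y lF lL lNI hF hL hNI βFLNI βFL
  have hge := hβFLNI (fun i => (βFLNI i + βFL i) / 2)
  have hS : ∑ i, (βFLNI i - βFL i) ^ 2 ≤ 0 := by linarith
  have hS0 : ∑ i, (βFLNI i - βFL i) ^ 2 = 0 :=
    le_antisymm hS (Finset.sum_nonneg fun i _ => sq_nonneg _)
  funext i
  have := (Finset.sum_eq_zero_iff_of_nonneg (fun i _ => sq_nonneg _)).mp hS0 i (mem_univ i)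
  have h0 : βFLNI i - βFL i = 0 := by
    have := sq_eq_zero_iff.mp this
    exact this
  linarith [h0]
end

section
/- Let D be an m×n real matrix, λ_F ≥ 0, λ_NI ≥ 0, and let Y be a random vector in ℝⁿ on a probability space such that each Y_i, each β̂^{FNI}_i(Y, λ_F, λ_NI), and each β̂^F_i(Y − (λ_NI/2)Dᵀ1, λ_NI/2 + λ_F) is square-integrable (so all covariances below are defined). Set Y' = Y − (λ_NI/2)Dᵀ1. Then Σ_{i=1}^n Cov[β̂^{FNI}_i(Y, λ_F, λ_NI), Y_i] = Σ_{i=1}^n Cov[β̂^F_i(Y', λ_NI/2 + λ_F), Y'_i]; that is, the (covariance) degrees of freedom of the fused nearly-isotonic estimator equals that of the fusion estimator applied to the shifted data. -/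
open Finset MeasureTheory ProbabilityTheory

/-- `Cov[U, V] = E[UV] − E[U]E[V]`. -/
noncomputable def cov {Ω : Type*} [MeasureSpace Ω] (U V : Ω → ℝ) : ℝ :=
  (∫ ω, U ω * V ω) - (∫ ω, U ω) * (∫ ω, V ω)

/-!
Since `max x 0 = (x + |x|) / 2`, the nearly-isotonic penalty `λ_NI Σ_j max((Dβ)_j, 0)` is the
fusion penalty `(λ_NI / 2) Σ_j |(Dβ)_j|` plus the linear term `(λ_NI / 2) (Dᵀ1) ⬝ β`, and completing
the square absorbs the linear term into the data. So the FNI objective at `y` and the fusion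
objective at `y − (λ_NI / 2) Dᵀ1` differ by a constant; by strict convexity both have the same
unique minimizer, i.e. `β̂^{FNI}(Y) = β̂^F(Y')` pointwise. The degrees of freedom then agree because
`Y'` differs from `Y` by a constant vector, which does not change covariances.
-/

theorem ConvexOn.finset_sum {ι E : Type*} [AddCommMonoid E] [Module ℝ E] {s : Set E}
    (hs : Convex ℝ s) (t : Finset ι) {f : ι → E → ℝ} (hf : ∀ i ∈ t, ConvexOn ℝ s (f i)) :
    ConvexOn ℝ s fun x => ∑ i ∈ t, f i x := by
  classical
  induction t using Finset.induction_on with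
  | empty => simpa using convexOn_const (0 : ℝ) hs
  | insert i t hi ih =>
    simp only [Finset.sum_insert hi]
    exact (hf i (mem_insert_self i t)).add (ih fun j hj => hf j (mem_insert_of_mem hj))

theorem strictConvexOn_const_mul_sum_sq_sub {ι : Type*} [Fintype ι] {c : ℝ} (hc : 0 < c)
    (y : ι → ℝ) : StrictConvexOn ℝ Set.univ fun β : ι → ℝ => c * ∑ i, (y i - β i) ^ 2 := by
  refine ⟨convex_univ, fun a _ b _ hab s t hs ht hst => ?_⟩
  obtain ⟨k, hk⟩ := Function.ne_iff.mp hab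
  have hgap : 0 < c * (s * t * ∑ i, (a i - b i) ^ 2) :=
    mul_pos hc <| mul_pos (mul_pos hs ht) <| Finset.sum_pos' (fun i _ => sq_nonneg _)
      ⟨k, mem_univ k, by positivity [sub_ne_zero.mpr hk]⟩
  have hmid : ∀ i, (y i - (s * a i + t * b i)) ^ 2
      = s * (y i - a i) ^ 2 + t * (y i - b i) ^ 2 - s * t * (a i - b i) ^ 2 := by
    intro i
    obtain rfl : t = 1 - s := by linarith
    ring
  simp only [Pi.add_apply, Pi.smul_apply, smul_eq_mul, hmid, Finset.sum_sub_distrib,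
    Finset.sum_add_distrib, ← Finset.mul_sum]
  linarith

theorem convexOn_abs_comp_linearMap {E : Type*} [AddCommGroup E] [Module ℝ E] (ℓ : E →ₗ[ℝ] ℝ) :
    ConvexOn ℝ Set.univ fun x => |ℓ x| :=
  (convexOn_norm convex_univ).comp_linearMap ℓ

theorem convexOn_max_zero_comp_linearMap {E : Type*} [AddCommGroup E] [Module ℝ E]
    (ℓ : E →ₗ[ℝ] ℝ) : ConvexOn ℝ Set.univ fun x => max (ℓ x) 0 :=
  ((convexOn_id convex_univ).sup (convexOn_const 0 convex_univ)).comp_linearMap ℓ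

theorem flniObj_strictConvexOn {n m : ℕ} (D : Matrix (Fin m) (Fin n) ℝ) (y : Fin n → ℝ)
    {lF lL lNI : ℝ} (hF : 0 ≤ lF) (hL : 0 ≤ lL) (hNI : 0 ≤ lNI) :
    StrictConvexOn ℝ Set.univ (flniObj D y lF lL lNI) := by
  let row (j : Fin m) : (Fin n → ℝ) →ₗ[ℝ] ℝ := (LinearMap.proj j).comp D.mulVecLin
  have hfused := (ConvexOn.finset_sum convex_univ univ fun j _ =>
    convexOn_abs_comp_linearMap (row j)).smul hF
  have hlasso := (ConvexOn.finset_sum convex_univ univ fun i _ =>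
    convexOn_abs_comp_linearMap (LinearMap.proj (R := ℝ) (φ := fun _ : Fin n => ℝ) i)).smul hL
  have hni := (ConvexOn.finset_sum convex_univ univ fun j _ =>
    convexOn_max_zero_comp_linearMap (row j)).smul hNI
  exact (((strictConvexOn_const_mul_sum_sq_sub (by norm_num : (0:ℝ) < 1 / 2) y).add_convexOn
    hfused).add_convexOn hlasso).add_convexOn hni

theorem sum_mulVec_eq_dotProduct {ι κ : Type*} [Fintype ι] [Fintype κ] (D : Matrix κ ι ℝ)
    (β : ι → ℝ) : ∑ j, D.mulVec β j = D.transpose.mulVec 1 ⬝ᵥ β := by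
  rw [Matrix.mulVec_transpose, ← Matrix.dotProduct_mulVec, one_dotProduct]

theorem max_zero_eq_add_abs_div_two (x : ℝ) : max x 0 = (x + |x|) / 2 := by
  rw [add_abs_eq_two_nsmul_posPart, nsmul_eq_mul]
  simp [posPart]

theorem flniObj_eq_flniObj_shift_add {n m : ℕ} (D : Matrix (Fin m) (Fin n) ℝ)
    (y : Fin n → ℝ) (lF lL lNI : ℝ) (β : Fin n → ℝ) :
    let c := (lNI / 2) • D.transpose.mulVec 1
    flniObj D y lF lL lNI β
      = flniObj D (y - c) (lNI / 2 + lF) lL 0 β + (c ⬝ᵥ y - c ⬝ᵥ c / 2) := by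
  intro c
  have hmax : ∑ j, max (D.mulVec β j) 0
      = (D.transpose.mulVec 1 ⬝ᵥ β + ∑ j, |D.mulVec β j|) / 2 := by
    simp only [max_zero_eq_add_abs_div_two, ← Finset.sum_div, Finset.sum_add_distrib,
      sum_mulVec_eq_dotProduct]
  have hquad : ∑ i, (y i - β i) ^ 2
      = ∑ i, ((y - c) i - β i) ^ 2 + 2 * c ⬝ᵥ y - 2 * c ⬝ᵥ β - c ⬝ᵥ c := by
    simp only [dotProduct, Finset.mul_sum, ← Finset.sum_add_distrib, ← Finset.sum_sub_distrib]
    refine Finset.sum_congr rfl fun i _ => ?_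
    simp only [Pi.sub_apply]
    ring
  simp only [flniObj, hmax, hquad, c, smul_dotProduct, smul_eq_mul]
  ring

theorem flniObj_minimizer_eq_shift {n m : ℕ} (D : Matrix (Fin m) (Fin n) ℝ) (y : Fin n → ℝ)
    {lF lL lNI : ℝ} (hF : 0 ≤ lF) (hL : 0 ≤ lL) (hNI : 0 ≤ lNI) {a b : Fin n → ℝ}
    (ha : ∀ β, flniObj D y lF lL lNI a ≤ flniObj D y lF lL lNI β)
    (hb : ∀ β, flniObj D (y - (lNI / 2) • D.transpose.mulVec 1) (lNI / 2 + lF) lL 0 b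
      ≤ flniObj D (y - (lNI / 2) • D.transpose.mulVec 1) (lNI / 2 + lF) lL 0 β) :
    a = b := by
  refine (flniObj_strictConvexOn D y hF hL hNI).eq_of_isMinOn (fun β _ => ha β)
    (fun β _ => ?_) trivial trivial
  simp only [Set.mem_ofPred_eq, flniObj_eq_flniObj_shift_add D y lF lL lNI]
  linarith [hb β]

theorem cov_eq_covariance {Ω : Type*} [MeasureSpace Ω] [IsProbabilityMeasure (ℙ : Measure Ω)]
    {U V : Ω → ℝ} (hU : MemLp U 2 ℙ) (hV : MemLp V 2 ℙ) : cov U V = covariance U V ℙ :=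
  (covariance_eq_sub hU hV).symm

theorem cov_sub_const_right {Ω : Type*} [MeasureSpace Ω] [IsProbabilityMeasure (ℙ : Measure Ω)]
    {U V : Ω → ℝ} (hU : MemLp U 2 ℙ) (hV : MemLp V 2 ℙ) (k : ℝ) :
    cov U (fun ω => V ω - k) = cov U V := by
  rw [cov_eq_covariance (V := fun ω => V ω - k) hU (hV.sub (memLp_const k)),
    cov_eq_covariance hU hV, covariance_sub_const_right (hV.integrable one_le_two)]

theorem df_fni_eq_df_fusion_shifted_general {Ω : Type*} [MeasureSpace Ω]
    [IsProbabilityMeasure (ℙ : Measure Ω)]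
    {n m : ℕ} (D : Matrix (Fin m) (Fin n) ℝ)
    (lF lNI : ℝ) (hF : 0 ≤ lF) (hNI : 0 ≤ lNI)
    (Y Y' : Ω → Fin n → ℝ)
    (hY' : ∀ ω, Y' ω = Y ω - (lNI / 2) • D.transpose.mulVec 1)
    (bFNI bF : (Fin n → ℝ) → (Fin n → ℝ))
    (hbFNI : ∀ y β, flniObj D y lF 0 lNI (bFNI y) ≤ flniObj D y lF 0 lNI β)
    (hbF : ∀ y β, flniObj D y (lNI / 2 + lF) 0 0 (bF y) ≤ flniObj D y (lNI / 2 + lF) 0 0 β)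
    (hY2 : ∀ i, MemLp (fun ω => Y ω i) 2 ℙ)
    (hbF2 : ∀ i, MemLp (fun ω => bF (Y' ω) i) 2 ℙ) :
    ∑ i, cov (fun ω => bFNI (Y ω) i) (fun ω => Y ω i) =
      ∑ i, cov (fun ω => bF (Y' ω) i) (fun ω => Y' ω i) := by
  have hestimator : ∀ ω, bFNI (Y ω) = bF (Y' ω) := fun ω => by
    rw [hY' ω]
    exact flniObj_minimizer_eq_shift D (Y ω) hF le_rfl hNI (hbFNI (Y ω)) (hbF _)
  refine Finset.sum_congr rfl fun i _ => ?_
  simp only [hestimator, hY', Pi.sub_apply]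
  exact (cov_sub_const_right (by simpa only [hY'] using hbF2 i) (hY2 i) _).symm

/-- The covariance degrees of freedom of the fused nearly-isotonic estimator
equals that of the fusion estimator applied to the shifted data
`Y' = Y − (λ_NI/2)Dᵀ1` at penalty `λ_NI/2 + λ_F`. -/
theorem df_fni_eq_df_fusion_shifted {Ω : Type*} [MeasureSpace Ω]
    [IsProbabilityMeasure (ℙ : Measure Ω)]
    {n m : ℕ} (D : Matrix (Fin m) (Fin n) ℝ)
    (lF lNI : ℝ) (hF : 0 ≤ lF) (hNI : 0 ≤ lNI)
    (Y Y' : Ω → Fin n → ℝ)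
    (hY' : ∀ ω, Y' ω = Y ω - (lNI / 2) • D.transpose.mulVec 1)
    (bFNI bF : (Fin n → ℝ) → (Fin n → ℝ))
    (hbFNI : ∀ y β, flniObj D y lF 0 lNI (bFNI y) ≤ flniObj D y lF 0 lNI β)
    (hbF : ∀ y β, flniObj D y (lNI / 2 + lF) 0 0 (bF y) ≤ flniObj D y (lNI / 2 + lF) 0 0 β)
    (hY2 : ∀ i, MemLp (fun ω => Y ω i) 2 ℙ)
    (hbFNI2 : ∀ i, MemLp (fun ω => bFNI (Y ω) i) 2 ℙ)
    (hbF2 : ∀ i, MemLp (fun ω => bF (Y' ω) i) 2 ℙ) :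
    ∑ i, cov (fun ω => bFNI (Y ω) i) (fun ω => Y ω i) =
      ∑ i, cov (fun ω => bF (Y' ω) i) (fun ω => Y' ω i) :=
  df_fni_eq_df_fusion_shifted_general D lF lNI hF hNI Y Y' hY' bFNI bF hbFNI hbF hY2 hbF2
end
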